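/- Let a, b, τ > 0, s ∈ ℝ, and σ > 0. For y ∈ ℝ and j ∈ {0, 1}, define I_j(y) = ∫₀¹ κ^{a−1/2+j} (1−κ)^{b−1} {1/τ² + (1 − 1/τ²)κ}^{−1} exp{−κ(s + y²/(2σ²))} dκ. Then lim_{y→∞} y · I₁(y)/I₀(y) = 0; consequently the posterior mean E(β | y) = (1 − I₁(y)/I₀(y)) · y under the hypergeometric-beta normal scale mixture is tail-robust: E(β | y) − y → 0 as y → ∞. -/

import Mathlib

/-!
Put `t = s + y²/(2σ²)` and `g(κ) = κ^{a-1/2} (1-κ)^{b-1} {1/τ² + (1-1/τ²)κ}⁻¹`, so that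
`I₀, I₁` are the Laplace transforms at `t` of `g` and `κ g` on `(0,1)`. For `0 < ε ≤ 1`,
`I₁ ≤ 2ε I₀ + e^{-2εt} ∫ g` and `I₀ ≥ e^{-εt} ∫_0^ε g ≳ e^{-εt} ε^{a+1/2}`, the latter
because `g ≍ κ^{a-1/2}` near `0`. Hence `I₁/I₀ ≤ 2ε + C ε^{-(a+1/2)} e^{-εt}`, and
`ε = t^{-3/4}` gives `√t · I₁/I₀ → 0`. Since `y = O(√t)`, also `y · I₁/I₀ → 0`.
-/

open MeasureTheory Set Filter

/-- The posterior integral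
`I_j(y) = ∫₀¹ κ^{a−1/2+j} (1−κ)^{b−1} {1/τ² + (1 − 1/τ²)κ}^{−1} exp{−κ(s + y²/(2σ²))} dκ`. -/
noncomputable def postInt (a b τ s σ : ℝ) (j : ℝ) (y : ℝ) : ℝ :=
  ∫ κ in Set.Ioo (0 : ℝ) 1,
    κ ^ (a - 1 / 2 + j) * (1 - κ) ^ (b - 1) * (1 / τ ^ 2 + (1 - 1 / τ ^ 2) * κ)⁻¹ *
      Real.exp (-(κ * (s + y ^ 2 / (2 * σ ^ 2))))

open Topology Real

noncomputable def unitLaplace (g : ℝ → ℝ) (t : ℝ) : ℝ :=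
  ∫ κ in Ioo 0 1, g κ * exp (-(κ * t))

section UnitLaplace

variable {g : ℝ → ℝ}

lemma MeasureTheory.IntegrableOn.mul_exp_neg_mul (hg : IntegrableOn g (Ioo 0 1)) (t : ℝ) :
    IntegrableOn (fun κ => g κ * exp (-(κ * t))) (Ioo 0 1) :=
  hg.mul_continuousOn_of_subset (by fun_prop) measurableSet_Ioo isCompact_Icc Ioo_subset_Icc_self

lemma MeasureTheory.IntegrableOn.id_mul (hg : IntegrableOn g (Ioo 0 1)) :
    IntegrableOn (fun κ => κ * g κ) (Ioo 0 1) := by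
  simpa only [mul_comm, id] using hg.mul_continuousOn_of_subset continuousOn_id
    measurableSet_Ioo isCompact_Icc Ioo_subset_Icc_self

lemma unitLaplace_nonneg (hg0 : ∀ κ ∈ Ioo 0 1, 0 ≤ g κ) (t : ℝ) : 0 ≤ unitLaplace g t :=
  setIntegral_nonneg measurableSet_Ioo fun κ hκ => mul_nonneg (hg0 κ hκ) (exp_pos _).le

lemma unitLaplace_id_mul_le (hg : IntegrableOn g (Ioo 0 1)) (hg0 : ∀ κ ∈ Ioo 0 1, 0 ≤ g κ)
    {t δ : ℝ} (ht : 0 ≤ t) (hδ : 0 ≤ δ) :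
    unitLaplace (fun κ => κ * g κ) t ≤
      δ * unitLaplace g t + exp (-(δ * t)) * ∫ κ in Ioo 0 1, g κ := by
  rw [unitLaplace, unitLaplace, ← integral_const_mul, ← integral_const_mul,
    ← integral_add ((hg.mul_exp_neg_mul t).const_mul δ) (hg.const_mul _)]
  refine setIntegral_mono_on (hg.id_mul.mul_exp_neg_mul t)
    (((hg.mul_exp_neg_mul t).const_mul δ).add (hg.const_mul _)) measurableSet_Ioo
    fun κ hκ => ?_
  -- `κ ≤ δ` on `(0, δ]`, and `e^{-κt} ≤ e^{-δt}` on `(δ, 1)`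
  have hgκ := hg0 κ hκ
  have hexp := (exp_pos (-(κ * t))).le
  rcases le_or_gt κ δ with hκδ | hδκ
  · have : κ * g κ * exp (-(κ * t)) ≤ δ * (g κ * exp (-(κ * t))) := by
      rw [← mul_assoc]; gcongr
    linarith [mul_nonneg (exp_pos (-(δ * t))).le hgκ]
  · have hdecay : exp (-(κ * t)) ≤ exp (-(δ * t)) := by gcongr
    have : κ * g κ * exp (-(κ * t)) ≤ exp (-(δ * t)) * g κ := by
      calc κ * g κ * exp (-(κ * t)) ≤ 1 * g κ * exp (-(δ * t)) := by
            gcongr; exact hκ.2.le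
        _ = exp (-(δ * t)) * g κ := by ring
    linarith [mul_nonneg hδ (mul_nonneg hgκ hexp)]

lemma exp_mul_setIntegral_le_unitLaplace (hg : IntegrableOn g (Ioo 0 1))
    (hg0 : ∀ κ ∈ Ioo 0 1, 0 ≤ g κ) {t ε : ℝ} (ht : 0 ≤ t) (hε : ε ≤ 1) :
    exp (-(ε * t)) * ∫ κ in Ioo 0 ε, g κ ≤ unitLaplace g t := by
  have hsub : Ioo 0 ε ⊆ Ioo (0 : ℝ) 1 := Ioo_subset_Ioo_right hε
  rw [← integral_const_mul]
  calc ∫ κ in Ioo 0 ε, exp (-(ε * t)) * g κ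
      ≤ ∫ κ in Ioo 0 ε, g κ * exp (-(κ * t)) :=
        setIntegral_mono_on ((hg.mono_set hsub).const_mul _)
          ((hg.mul_exp_neg_mul t).mono_set hsub) measurableSet_Ioo fun κ hκ => by
            rw [mul_comm]; gcongr; exacts [hg0 κ (hsub hκ), hκ.2.le]
    _ ≤ unitLaplace g t :=
        setIntegral_mono_set (hg.mul_exp_neg_mul t)
          ((ae_restrict_iff' measurableSet_Ioo).2 (Eventually.of_forall fun κ hκ =>
            mul_nonneg (hg0 κ hκ) (exp_pos _).le))
          hsub.eventuallyLE

lemma unitLaplace_ratio_le (hg : IntegrableOn g (Ioo 0 1)) (hg0 : ∀ κ ∈ Ioo 0 1, 0 ≤ g κ)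
    {t ε : ℝ} (ht : 0 ≤ t) (hε : 0 ≤ ε) (hε1 : ε ≤ 1) (hmass : 0 < ∫ κ in Ioo 0 ε, g κ) :
    unitLaplace (fun κ => κ * g κ) t / unitLaplace g t ≤
      2 * ε + exp (-(ε * t)) * (∫ κ in Ioo 0 1, g κ) / ∫ κ in Ioo 0 ε, g κ := by
  set G := ∫ κ in Ioo 0 1, g κ
  set L := ∫ κ in Ioo 0 ε, g κ
  have hG : 0 ≤ G := setIntegral_nonneg measurableSet_Ioo hg0
  have hlow := exp_mul_setIntegral_le_unitLaplace hg hg0 ht hε1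
  have hI0 : 0 < unitLaplace g t := lt_of_lt_of_le (by positivity) hlow
  have htail : exp (-(2 * ε * t)) * G ≤ exp (-(ε * t)) * G * unitLaplace g t / L := by
    rw [le_div_iff₀ hmass]
    calc exp (-(2 * ε * t)) * G * L = exp (-(ε * t)) * G * (exp (-(ε * t)) * L) := by
          rw [show -(2 * ε * t) = -(ε * t) + -(ε * t) by ring, exp_add]; ring
      _ ≤ exp (-(ε * t)) * G * unitLaplace g t := by gcongr
  rw [div_le_iff₀ hI0]
  calc unitLaplace (fun κ => κ * g κ) t ≤ 2 * ε * unitLaplace g t + exp (-(2 * ε * t)) * G :=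
        unitLaplace_id_mul_le hg hg0 ht (by positivity)
    _ ≤ 2 * ε * unitLaplace g t + exp (-(ε * t)) * G * unitLaplace g t / L := by
        gcongr
    _ = _ := by ring

end UnitLaplace

lemma mul_rpow_div_le_setIntegral {g : ℝ → ℝ} {c p ε : ℝ} (hp : -1 < p) (hε : 0 ≤ ε)
    (hg : IntegrableOn g (Ioo 0 ε)) (hlow : ∀ κ ∈ Ioo 0 ε, c * κ ^ p ≤ g κ) :
    c * (ε ^ (p + 1) / (p + 1)) ≤ ∫ κ in Ioo 0 ε, g κ := by
  have hpow : ∫ κ in Ioo 0 ε, κ ^ p = ε ^ (p + 1) / (p + 1) := by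
    rw [← integral_Ioc_eq_integral_Ioo, ← intervalIntegral.integral_of_le hε,
      integral_rpow (Or.inl hp), zero_rpow (by linarith), sub_zero]
  rw [← hpow, ← integral_const_mul]
  exact setIntegral_mono_on
    ((((intervalIntegral.intervalIntegrable_rpow' hp).1).mono_set
      (by simpa [uIoc_of_le hε] using Ioo_subset_Ioc_self)).const_mul c)
    hg measurableSet_Ioo hlow

lemma tendsto_rpow_mul_exp_neg_rpow (m : ℝ) {β : ℝ} (hβ : 0 < β) :
    Tendsto (fun t : ℝ => t ^ m * exp (-t ^ β)) atTop (𝓝 0) := by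
  refine ((tendsto_rpow_mul_exp_neg_mul_atTop_nhds_zero (m / β) 1 one_pos).comp
    (tendsto_rpow_atTop hβ)).congr' ?_
  filter_upwards [eventually_ge_atTop 0] with t ht
  rw [Function.comp_apply, ← rpow_mul ht, mul_div_cancel₀ _ hβ.ne', neg_one_mul]

theorem tendsto_rpow_mul_unitLaplace_ratio {g : ℝ → ℝ} (hg : IntegrableOn g (Ioo 0 1))
    (hg0 : ∀ κ ∈ Ioo 0 1, 0 ≤ g κ) {c p : ℝ} (hc : 0 < c) (hp : -1 < p)
    (hlow : ∀ᶠ κ in 𝓝[>] 0, c * κ ^ p ≤ g κ) {r : ℝ} (hr0 : 0 ≤ r) (hr1 : r < 1) :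
    Tendsto (fun t => t ^ r * (unitLaplace (fun κ => κ * g κ) t / unitLaplace g t))
      atTop (𝓝 0) := by
  obtain ⟨u, hu0, hu⟩ := mem_nhdsGT_iff_exists_Ioo_subset.1 hlow
  set G := ∫ κ in Ioo 0 1, g κ
  set q := p + 1
  -- With `ε = t^{-α}`, `t^r ε → 0` as `α > r`, and `e^{-εt} = e^{-t^{1-α}}` beats any power of `t`.
  set α := (1 + r) / 2
  have hq : 0 < q := by linarith
  have hα : 0 < α := by positivity
  have hrα : r < α := by simp only [α]; linarith
  have hα1 : α < 1 := by simp only [α]; linarith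
  have hbound : Tendsto (fun t : ℝ => 2 * t ^ (-(α - r)) +
      G * q / c * (t ^ (r + α * q) * exp (-t ^ (1 - α)))) atTop (𝓝 0) := by
    simpa using ((tendsto_rpow_neg_atTop (sub_pos.2 hrα)).const_mul 2).add
      ((tendsto_rpow_mul_exp_neg_rpow (r + α * q) (sub_pos.2 hα1)).const_mul
        (G * q / c))
  have hε : ∀ᶠ t : ℝ in atTop, t ^ (-α) < min 1 u :=
    (tendsto_rpow_neg_atTop hα).eventually (eventually_lt_nhds (by simp [hu0.out]))
  refine tendsto_of_tendsto_of_tendsto_of_le_of_le' tendsto_const_nhds hbound ?_ ?_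
  · filter_upwards [eventually_ge_atTop 0] with t ht
    exact mul_nonneg (rpow_nonneg ht r) (div_nonneg
      (unitLaplace_nonneg (fun κ hκ => mul_nonneg hκ.1.le (hg0 κ hκ)) t)
      (unitLaplace_nonneg hg0 t))
  · filter_upwards [eventually_gt_atTop 0, hε] with t ht htε
    set ε := t ^ (-α)
    have hε0 : 0 < ε := rpow_pos_of_pos ht _
    have hε1 : ε ≤ 1 := (htε.trans_le (min_le_left _ _)).le
    have hmass : c * (ε ^ q / q) ≤ ∫ κ in Ioo 0 ε, g κ :=
      mul_rpow_div_le_setIntegral hp hε0.le (hg.mono_set (Ioo_subset_Ioo_right hε1))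
        fun κ hκ => hu ⟨hκ.1, hκ.2.trans (htε.trans_le (min_le_right _ _))⟩
    have hratio := unitLaplace_ratio_le hg hg0 ht.le hε0.le hε1
      ((by positivity : 0 < c * (ε ^ q / q)).trans_le hmass)
    have hG : 0 ≤ G := setIntegral_nonneg measurableSet_Ioo hg0
    have e1 : t ^ r * ε = t ^ (-(α - r)) := by rw [← rpow_add ht]; ring_nf
    have e2 : ε * t = t ^ (1 - α) := by rw [← rpow_add_one ht.ne']; ring_nf
    have e3 : t ^ r / ε ^ q = t ^ (r + α * q) := by
      rw [← rpow_mul ht.le, ← rpow_sub ht]; ring_nf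
    calc t ^ r * (unitLaplace (fun κ => κ * g κ) t / unitLaplace g t)
        ≤ t ^ r * (2 * ε + exp (-(ε * t)) * G / (c * (ε ^ q / q))) := by
          gcongr
          exact hratio.trans (by gcongr)
      _ = 2 * (t ^ r * ε) + G * q / c * (t ^ r / ε ^ q * exp (-(ε * t))) := by
          field_simp
      _ = _ := by rw [e1, e2, e3]

lemma integrableOn_rpow_mul_one_sub_rpow {p q : ℝ} (hp : -1 < p) (hq : -1 < q) :
    IntegrableOn (fun x : ℝ => x ^ p * (1 - x) ^ q) (Ioo 0 1) := by
  have hbeta := (Complex.betaIntegral_convergent (u := p + 1) (v := q + 1)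
    (by simp; linarith) (by simp; linarith)).norm
  rw [intervalIntegrable_iff_integrableOn_Ioo_of_le zero_le_one] at hbeta
  refine hbeta.congr_fun (fun x hx => ?_) measurableSet_Ioo
  have h1x : (1 - (x : ℂ)) = ((1 - x : ℝ) : ℂ) := by push_cast; ring
  dsimp only
  rw [norm_mul, h1x, Complex.norm_cpow_eq_rpow_re_of_pos hx.1,
    Complex.norm_cpow_eq_rpow_re_of_pos (sub_pos.2 hx.2)]
  simp

lemma hbDenom_pos {τ κ : ℝ} (hτ : τ ≠ 0) (h0 : 0 ≤ κ) (h1 : κ ≤ 1) :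
    0 < 1 / τ ^ 2 + (1 - 1 / τ ^ 2) * κ := by
  have hu : 0 < 1 / τ ^ 2 := by positivity
  nlinarith [mul_nonneg hu.le (sub_nonneg.2 h1)]

noncomputable def hbWeight (p b τ κ : ℝ) : ℝ :=
  κ ^ p * (1 - κ) ^ (b - 1) * (1 / τ ^ 2 + (1 - 1 / τ ^ 2) * κ)⁻¹

section hbWeight

variable {p b τ : ℝ}

lemma hbWeight_nonneg (hτ : τ ≠ 0) {κ : ℝ} (hκ : κ ∈ Ioo 0 1) : 0 ≤ hbWeight p b τ κ :=
  mul_nonneg (mul_nonneg (rpow_nonneg hκ.1.le _) (rpow_nonneg (sub_nonneg.2 hκ.2.le) _))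
    (inv_nonneg.2 (hbDenom_pos hτ hκ.1.le hκ.2.le).le)

lemma integrableOn_hbWeight (hp : -1 < p) (hb : 0 < b) (hτ : τ ≠ 0) :
    IntegrableOn (hbWeight p b τ) (Ioo 0 1) :=
  (integrableOn_rpow_mul_one_sub_rpow hp (by linarith : -1 < b - 1)).mul_continuousOn_of_subset
    (ContinuousOn.inv₀ (by fun_prop) fun κ hκ => (hbDenom_pos hτ hκ.1 hκ.2).ne')
    measurableSet_Ioo isCompact_Icc Ioo_subset_Icc_self

lemma eventually_mul_rpow_le_hbWeight (hτ : τ ≠ 0) :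
    ∀ᶠ κ in 𝓝[>] 0, τ ^ 2 / 2 * κ ^ p ≤ hbWeight p b τ κ := by
  have hcont : ContinuousAt
      (fun κ : ℝ => (1 - κ) ^ (b - 1) * (1 / τ ^ 2 + (1 - 1 / τ ^ 2) * κ)⁻¹) 0 :=
    ((continuousAt_const.sub continuousAt_id).rpow_const (Or.inl (by simp))).mul
      ((continuousAt_const.add (continuousAt_const.mul continuousAt_id)).inv₀ (by simpa using hτ))
  have hlim : τ ^ 2 / 2 < (1 - 0) ^ (b - 1) * (1 / τ ^ 2 + (1 - 1 / τ ^ 2) * 0)⁻¹ := by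
    simp only [sub_zero, one_rpow, mul_zero, add_zero, one_div, inv_inv, one_mul]
    exact half_lt_self (by positivity)
  filter_upwards [nhdsWithin_le_nhds (hcont.eventually (eventually_gt_nhds hlim)),
    self_mem_nhdsWithin] with κ hκ (hκ0 : 0 < κ)
  rw [hbWeight, mul_assoc, mul_comm (τ ^ 2 / 2)]
  exact mul_le_mul_of_nonneg_left hκ.le (rpow_nonneg hκ0.le p)

end hbWeight

lemma postInt_zero (a b τ s σ y : ℝ) :
    postInt a b τ s σ 0 y = unitLaplace (hbWeight (a - 1 / 2) b τ) (s + y ^ 2 / (2 * σ ^ 2)) := by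
  simp only [postInt, unitLaplace, hbWeight, add_zero]

lemma postInt_one (a b τ s σ y : ℝ) :
    postInt a b τ s σ 1 y =
      unitLaplace (fun κ => κ * hbWeight (a - 1 / 2) b τ κ) (s + y ^ 2 / (2 * σ ^ 2)) := by
  refine setIntegral_congr_fun measurableSet_Ioo fun κ hκ => ?_
  simp only [hbWeight, rpow_add_one hκ.1.ne']
  ring

lemma le_mul_rpow_add_sq_div (s : ℝ) {σ : ℝ} (hσ : 0 < σ) :
    ∀ᶠ y : ℝ in atTop, y ≤ 2 * σ * (s + y ^ 2 / (2 * σ ^ 2)) ^ (1 / 2 : ℝ) := by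
  filter_upwards [((tendsto_pow_atTop two_ne_zero).atTop_div_const
    (by positivity : (0 : ℝ) < 4 * σ ^ 2)).eventually_ge_atTop (-s)] with y hys
  rw [← sqrt_eq_rpow, ← div_le_iff₀' (by positivity)]
  refine le_sqrt_of_sq_le ?_
  have e1 : (y / (2 * σ)) ^ 2 = y ^ 2 / (4 * σ ^ 2) := by field_simp; ring
  have e2 : y ^ 2 / (2 * σ ^ 2) = 2 * (y ^ 2 / (4 * σ ^ 2)) := by field_simp; ring
  rw [e1, e2]
  linarith [div_nonneg (sq_nonneg y) (by positivity : (0 : ℝ) ≤ 4 * σ ^ 2)]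

lemma tendsto_mul_comp_add_sq_div {R : ℝ → ℝ} (hR0 : ∀ t, 0 ≤ R t)
    (hR : Tendsto (fun t => t ^ (1 / 2 : ℝ) * R t) atTop (𝓝 0)) (s : ℝ) {σ : ℝ} (hσ : 0 < σ) :
    Tendsto (fun y => y * R (s + y ^ 2 / (2 * σ ^ 2))) atTop (𝓝 0) := by
  have ht : Tendsto (fun y : ℝ => s + y ^ 2 / (2 * σ ^ 2)) atTop atTop :=
    tendsto_atTop_add_const_left _ _
      ((tendsto_pow_atTop two_ne_zero).atTop_div_const (by positivity))
  have hupper : Tendsto (fun y => 2 * σ *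
      ((s + y ^ 2 / (2 * σ ^ 2)) ^ (1 / 2 : ℝ) * R (s + y ^ 2 / (2 * σ ^ 2)))) atTop (𝓝 0) := by
    simpa using (hR.comp ht).const_mul (2 * σ)
  refine tendsto_of_tendsto_of_tendsto_of_le_of_le' tendsto_const_nhds hupper ?_ ?_
  · filter_upwards [eventually_ge_atTop 0] with y hy0
    exact mul_nonneg hy0 (hR0 _)
  · filter_upwards [le_mul_rpow_add_sq_div s hσ] with y hy
    calc y * R _ ≤ 2 * σ * (s + y ^ 2 / (2 * σ ^ 2)) ^ (1 / 2 : ℝ) * R _ :=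
          mul_le_mul_of_nonneg_right hy (hR0 _)
      _ = _ := by ring

theorem hb_tail_robustness (a b τ s σ : ℝ) (ha : 0 < a) (hb : 0 < b) (hτ : 0 < τ)
    (hσ : 0 < σ) :
    Tendsto (fun y : ℝ => y * (postInt a b τ s σ 1 y / postInt a b τ s σ 0 y))
        atTop (nhds 0) ∧
      Tendsto
        (fun y : ℝ => (1 - postInt a b τ s σ 1 y / postInt a b τ s σ 0 y) * y - y)
        atTop (nhds 0) := by
  set g := hbWeight (a - 1 / 2) b τ
  set R : ℝ → ℝ := fun t => unitLaplace (fun κ => κ * g κ) t / unitLaplace g t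
  have hg0 : ∀ κ ∈ Ioo 0 1, 0 ≤ g κ := fun κ => hbWeight_nonneg hτ.ne'
  have hR0 : ∀ t, 0 ≤ R t := fun t => div_nonneg
    (unitLaplace_nonneg (fun κ hκ => mul_nonneg hκ.1.le (hg0 κ hκ)) t) (unitLaplace_nonneg hg0 t)
  have hR : Tendsto (fun t => t ^ (1 / 2 : ℝ) * R t) atTop (𝓝 0) :=
    tendsto_rpow_mul_unitLaplace_ratio (integrableOn_hbWeight (by linarith) hb hτ.ne') hg0
      (by positivity) (by linarith) (eventually_mul_rpow_le_hbWeight hτ.ne') (by norm_num)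
      (by norm_num)
  have hpost : ∀ y, postInt a b τ s σ 1 y / postInt a b τ s σ 0 y =
      R (s + y ^ 2 / (2 * σ ^ 2)) := fun y => by rw [postInt_one, postInt_zero]
  have hmain := tendsto_mul_comp_add_sq_div hR0 hR s hσ
  simp only [hpost]
  exact ⟨hmain, by simpa using hmain.neg.congr fun y => by ring⟩
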